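/- arXiv:1507.04846 — 3 statements merged into one kernel-verified Lean document; each statement's English description precedes it below -/
import Mathlib

section
/- For all n ≥ 0 and u ≠ 0, 1, the reflection-type symmetry (-1)ⁿ · h_{n,-λ}(-x|u) = h_{n,λ}(x+1|u⁻¹) holds. -/
open PowerSeries Finset

noncomputable section

/-- Degenerate falling factorial `(x|λ)_n = x(x-λ)⋯(x-(n-1)λ)`. -/
def degFall {K : Type*} [Ring K] (l x : K) : ℕ → K
  | 0 => 1
  | n + 1 => degFall l x n * (x - (n : K) * l)

/-- The formal power series `(1+λt)^{x/λ} := ∑_{m≥0} (x|λ)_m t^m/m!`. -/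
def binExp {K : Type*} [Field K] (l x : K) : PowerSeries K :=
  PowerSeries.mk fun n => degFall l x n / (n.factorial : K)

/-- Degenerate Frobenius–Euler polynomials `h_{n,λ}(x|u)`, defined by
`(1-u)/((1+λt)^{1/λ} - u) · (1+λt)^{x/λ} = ∑ h_{n,λ}(x|u) tⁿ/n!`. -/
def dFE {K : Type*} [Field K] (l u x : K) (n : ℕ) : K :=
  (n.factorial : K) * PowerSeries.coeff (R := K) n
    ((PowerSeries.C (R := K) (1 - u)) * (binExp l 1 - PowerSeries.C (R := K) u)⁻¹ * binExp l x)

/-- Degenerate Frobenius–Euler polynomials of order `r`. -/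
def dFEr {K : Type*} [Field K] (r : ℕ) (l u x : K) (n : ℕ) : K :=
  (n.factorial : K) * PowerSeries.coeff (R := K) n
    (((PowerSeries.C (R := K) (1 - u)) * (binExp l 1 - PowerSeries.C (R := K) u)⁻¹) ^ r * binExp l x)

/-- The exponential series `e^{xt} = ∑ xⁿ tⁿ/n!`. -/
def expX {K : Type*} [Field K] (x : K) : PowerSeries K :=
  PowerSeries.mk fun n => x ^ n / (n.factorial : K)

/-- Higher-order Frobenius–Euler polynomials `H^{(r)}_n(x|u)`, defined by
`((1-u)/(e^t-u))^r e^{xt} = ∑ H^{(r)}_n(x|u) tⁿ/n!`. -/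
def FEr {K : Type*} [Field K] (r : ℕ) (u x : K) (n : ℕ) : K :=
  (n.factorial : K) * PowerSeries.coeff (R := K) n
    (((PowerSeries.C (R := K) (1 - u)) * (expX (1 : K) - PowerSeries.C (R := K) u)⁻¹) ^ r * expX x)

/-- Signed Stirling numbers of the first kind: `(x)_n = ∑ S₁(n,l) x^l`. -/
def S1 : ℕ → ℕ → ℤ
  | 0, 0 => 1
  | 0, _ + 1 => 0
  | n + 1, 0 => -(n : ℤ) * S1 n 0
  | n + 1, k + 1 => S1 n k - (n : ℤ) * S1 n (k + 1)

/-- Stirling numbers of the second kind: `xⁿ = ∑ S₂(n,l) (x)_l`. -/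
def S2 : ℕ → ℕ → ℤ
  | 0, 0 => 1
  | 0, _ + 1 => 0
  | _ + 1, 0 => 0
  | n + 1, k + 1 => S2 n k + ((k : ℤ) + 1) * S2 n (k + 1)

/-!
Substituting `t ↦ -t` turns `(1 + (-λ)t)^{y/(-λ)}` into `(1 + λt)^{-y/λ}`, so with
`E = (1 + λt)^{1/λ}` the generating function of `(-1)ⁿ h_{n,-λ}(-x|u)` is
`(1-u)/(E⁻¹ - u) · E^x`. Multiplying numerator and denominator by `-u⁻¹ E` rewrites it as
`(1-u⁻¹)/(E - u⁻¹) · E^{x+1}`, the generating function of `h_{n,λ}(x+1|u⁻¹)`. The only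
input about `E` is the law `E^x E^y = E^{x+y}`, i.e. the Vandermonde identity for degenerate falling factorials.
-/

namespace PowerSeries

variable {k : Type*} [Field k]

theorem rescale_C (a r : k) : rescale a (C r) = C r := by
  ext (_ | n) <;> simp [coeff_C]

theorem rescale_inv (a : k) (φ : k⟦X⟧) : rescale a φ⁻¹ = (rescale a φ)⁻¹ := by
  by_cases h : constantCoeff φ = 0
  · rw [inv_eq_zero.mpr h, map_zero, eq_comm, inv_eq_zero, ← coeff_zero_eq_constantCoeff_apply,
      coeff_rescale, coeff_zero_eq_constantCoeff_apply, h, mul_zero]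
  · have h' : constantCoeff (rescale a φ) ≠ 0 := by
      rwa [← coeff_zero_eq_constantCoeff_apply, coeff_rescale, pow_zero, one_mul,
        coeff_zero_eq_constantCoeff_apply]
    rw [eq_inv_iff_mul_eq_one h', ← map_mul, PowerSeries.inv_mul_cancel φ h, map_one]

theorem inv_sub_C_inv {A : k⟦X⟧} (hA : constantCoeff A ≠ 0) {u : k} (hu : u ≠ 0) :
    (A⁻¹ - C u)⁻¹ = C (-u⁻¹) * A * (A - C u⁻¹)⁻¹ := by
  have hA' : A⁻¹⁻¹ = A := by
    rw [inv_eq_iff_mul_eq_one (by rw [constantCoeff_inv]; exact inv_ne_zero hA),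
      PowerSeries.mul_inv_cancel A hA]
  have hfactor : A⁻¹ - C u = C (-u) * (A - C u⁻¹) * A⁻¹ := by
    have hCu : C u * C u⁻¹ = 1 := by rw [← map_mul, mul_inv_cancel₀ hu, map_one]
    rw [map_neg]
    linear_combination C u * PowerSeries.mul_inv_cancel A hA - A⁻¹ * hCu
  rw [hfactor, PowerSeries.mul_inv_rev, PowerSeries.mul_inv_rev, hA', C_inv, inv_neg]
  ring

end PowerSeries

section DegenerateExponential

variable {K : Type*}

theorem degFall_mul_mul [CommRing K] (c l x : K) (n : ℕ) :
    degFall (c * l) (c * x) n = c ^ n * degFall l x n := by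
  induction n with
  | zero => simp [degFall]
  | succ n ih => simp only [degFall, ih, pow_succ]; ring

theorem degFall_zero_succ [Ring K] (l : K) (n : ℕ) : degFall l 0 (n + 1) = 0 := by
  induction n with
  | zero => simp [degFall]
  | succ n ih => rw [degFall, ih, zero_mul]

theorem degFall_add [CommRing K] (l x y : K) (n : ℕ) :
    degFall l (x + y) n = ∑ ij ∈ antidiagonal n,
      (n.choose ij.1 : K) * (degFall l x ij.1 * degFall l y ij.2) := by
  induction n with
  | zero => simp [degFall]
  | succ n ih =>
    rw [sum_antidiagonal_choose_succ_mul (fun i j => degFall l x i * degFall l y j), degFall, ih,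
      sum_mul, ← sum_add_distrib]
    refine sum_congr rfl fun ij hij => ?_
    rw [HasAntidiagonal.mem_antidiagonal] at hij
    have hn : (n : K) = ij.1 + ij.2 := by rw [← hij, Nat.cast_add]
    rw [Nat.choose_symm_of_eq_add hij.symm, degFall, degFall, hn]
    ring

variable [Field K]

theorem rescale_binExp (c l x : K) : rescale c (binExp l x) = binExp (c * l) (c * x) := by
  ext n
  simp [binExp, degFall_mul_mul, mul_div_assoc]

theorem binExp_zero (l : K) : binExp l 0 = 1 := by
  ext (_ | n)
  · simp [binExp, degFall]
  · simp [binExp, degFall_zero_succ]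

theorem constantCoeff_binExp (l x : K) : constantCoeff (binExp l x) = 1 := by
  simp [← coeff_zero_eq_constantCoeff_apply, binExp, degFall]

theorem binExp_mul [CharZero K] (l x y : K) : binExp l x * binExp l y = binExp l (x + y) := by
  ext n
  simp only [coeff_mul, binExp, coeff_mk, degFall_add, sum_div]
  refine sum_congr rfl fun ij hij => ?_
  rw [HasAntidiagonal.mem_antidiagonal] at hij
  subst hij
  have : ((ij.1 + ij.2).factorial : K) ≠ 0 := Nat.cast_ne_zero.mpr (Nat.factorial_ne_zero _)
  rw [Nat.cast_add_choose]
  field_simp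

theorem binExp_neg [CharZero K] (l x : K) : binExp l (-x) = (binExp l x)⁻¹ := by
  rw [eq_inv_iff_mul_eq_one (by simp [constantCoeff_binExp]), binExp_mul, neg_add_cancel,
    binExp_zero]

end DegenerateExponential

section Reflection

variable {K : Type*} [Field K]

def dFEGenFun (l u x : K) : K⟦X⟧ :=
  C (1 - u) * (binExp l 1 - C u)⁻¹ * binExp l x

theorem rescale_neg_one_dFEGenFun [CharZero K] (l x : K) {u : K} (hu : u ≠ 0) :
    rescale (-1) (dFEGenFun (-l) u (-x)) = dFEGenFun l u⁻¹ (x + 1) := by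
  have hC : C (1 - u⁻¹) = C (1 - u) * C (-u⁻¹) := by
    rw [← map_mul]
    congr 1
    field_simp
    ring
  rw [dFEGenFun, dFEGenFun, map_mul, map_mul, rescale_inv, map_sub (rescale (-1 : K)),
    rescale_C, rescale_C, rescale_binExp, rescale_binExp, neg_mul_neg, neg_mul_neg, one_mul,
    one_mul, mul_one, binExp_neg, inv_sub_C_inv (by simp [constantCoeff_binExp]) hu,
    add_comm x, ← binExp_mul, hC]
  ring

end Reflection

theorem stmt3_general {K : Type*} [Field K] [CharZero K] (l u x : K) (hu0 : u ≠ 0)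
    (n : ℕ) :
    (-1 : K) ^ n * dFE (-l) u (-x) n = dFE l u⁻¹ (x + 1) n := by
  have h := congrArg (coeff n) (rescale_neg_one_dFEGenFun l x hu0)
  rw [coeff_rescale] at h
  change (-1) ^ n * (n.factorial * coeff n (dFEGenFun (-l) u (-x)))
    = n.factorial * coeff n (dFEGenFun l u⁻¹ (x + 1))
  rw [← h]
  ring

theorem stmt3 {K : Type*} [Field K] [CharZero K] (l u x : K) (hu0 : u ≠ 0) (hu1 : u ≠ 1)
    (n : ℕ) :
    (-1 : K) ^ n * dFE (-l) u (-x) n = dFE l u⁻¹ (x + 1) n :=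
  stmt3_general l u x hu0 n
end
end

section
/- For all m ≥ 0, the ordinary higher-order Frobenius-Euler polynomial H^{(r)}_m(x|u) equals ∑_{n=0}^{m} h^{(r)}_{n,λ}(x|u) · λ^{m-n} · S₂(m,n), where S₂(m,n) are the Stirling numbers of the second kind. -/
/-!
Write `E(t) = (e^{λt} - 1)/λ`, so that `1 + λE(t) = e^{λt}`. Substituting `E` for `t` is a ring
endomorphism of `K⟦t⟧` which turns `(1+λt)^{y/λ}` into `e^{yt}`, hence turns the degenerate
generating function `((1-u)/((1+λt)^{1/λ}-u))^r (1+λt)^{x/λ}` into the ordinary one. Since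
`E(t)^n/n! = ∑_m λ^{m-n} S₂(m,n) t^m/m!`, the substitution sends a series with exponential
coefficients `(h_n)` to the one with coefficients `(∑_n h_n λ^{m-n} S₂(m,n))_m`; in particular
`(1+λt)^{y/λ} ↦ e^{yt}` amounts to the identity `y^m = ∑_n (y|λ)_n λ^{m-n} S₂(m,n)`.
-/

open PowerSeries Finset

noncomputable section

theorem S2_eq_stirlingSecond : ∀ m n : ℕ, S2 m n = Nat.stirlingSecond m n
  | 0, 0 | 0, _ + 1 | _ + 1, 0 => rfl
  | m + 1, n + 1 => by
    rw [S2, Nat.stirlingSecond_succ_succ, S2_eq_stirlingSecond m n,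
      S2_eq_stirlingSecond m (n + 1)]
    push_cast
    ring

section ScaledStirling

variable {R : Type*} [CommRing R] (l : R)

theorem pow_mul_stirlingSecond_succ_succ (m n : ℕ) :
    l ^ (m + 1 - (n + 1)) * (Nat.stirlingSecond (m + 1) (n + 1) : R) =
      l ^ (m - n) * Nat.stirlingSecond m n
        + (n + 1) * l * (l ^ (m - (n + 1)) * Nat.stirlingSecond m (n + 1)) := by
  rw [Nat.succ_sub_succ, Nat.stirlingSecond_succ_succ]
  rcases lt_or_ge m (n + 1) with hmn | hnm
  · simp [Nat.stirlingSecond_eq_zero_of_lt hmn]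
  · rw [show m - n = m - (n + 1) + 1 by omega]
    push_cast
    ring

theorem sum_degFall_mul_pow_mul_stirlingSecond (y : R) (m : ℕ) :
    ∑ n ∈ range (m + 1), degFall l y n * (l ^ (m - n) * Nat.stirlingSecond m n) = y ^ m := by
  induction m with
  | zero => simp [degFall]
  | succ m ih =>
    have hshift : ∑ n ∈ range (m + 1),
          (n + 1) * l * degFall l y (n + 1) * (l ^ (m - (n + 1)) * Nat.stirlingSecond m (n + 1)) =
        ∑ n ∈ range (m + 1), n * l * degFall l y n * (l ^ (m - n) * Nat.stirlingSecond m n) := by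
      have h := sum_range_succ' (fun n => n * l * degFall l y n *
        (l ^ (m - n) * (Nat.stirlingSecond m n : R))) (m + 1)
      rw [sum_range_succ, Nat.stirlingSecond_eq_zero_of_lt (Nat.lt_succ_self m)] at h
      simpa using h.symm
    calc ∑ n ∈ range (m + 1 + 1),
          degFall l y n * (l ^ (m + 1 - n) * Nat.stirlingSecond (m + 1) n)
        = ∑ n ∈ range (m + 1), (degFall l y (n + 1) * (l ^ (m - n) * Nat.stirlingSecond m n)
            + (n + 1) * l * degFall l y (n + 1) *
              (l ^ (m - (n + 1)) * Nat.stirlingSecond m (n + 1))) := by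
          rw [sum_range_succ', Nat.stirlingSecond_succ_zero, Nat.cast_zero, mul_zero, mul_zero,
            add_zero]
          exact sum_congr rfl fun n _ => by rw [pow_mul_stirlingSecond_succ_succ]; ring
      _ = ∑ n ∈ range (m + 1), y * (degFall l y n * (l ^ (m - n) * Nat.stirlingSecond m n)) := by
          rw [sum_add_distrib, hshift, ← sum_add_distrib]
          exact sum_congr rfl fun n _ => by rw [degFall]; ring
      _ = y ^ (m + 1) := by rw [← mul_sum, ih, pow_succ']

end ScaledStirling

section ExpSubOneDiv

variable {K : Type*} [Field K]

/-- The series `(e^{λt} - 1)/λ`, read as `t` at `λ = 0`. -/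
def expSubOneDiv (l : K) : K⟦X⟧ :=
  mk fun m => if m = 0 then 0 else l ^ (m - 1) / m.factorial

theorem constantCoeff_expSubOneDiv (l : K) : constantCoeff (expSubOneDiv l) = 0 := by
  simp [expSubOneDiv, ← coeff_zero_eq_constantCoeff_apply]

theorem hasSubst_expSubOneDiv (l : K) : HasSubst (expSubOneDiv l) :=
  HasSubst.of_constantCoeff_zero' (constantCoeff_expSubOneDiv l)

variable [CharZero K]

theorem derivative_expSubOneDiv (l : K) :
    d⁄dX K (expSubOneDiv l) = 1 + C l * expSubOneDiv l := by
  ext n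
  rcases n with _ | n
  · simp [expSubOneDiv, coeff_derivative]
  · simp only [expSubOneDiv, coeff_derivative, coeff_mk, map_add, coeff_one, coeff_C_mul,
      Nat.succ_ne_zero, if_false, Nat.add_sub_cancel, Nat.factorial_succ (n + 1)]
    push_cast
    have : (n : K) + 1 + 1 ≠ 0 := by exact_mod_cast Nat.succ_ne_zero (n + 1)
    field_simp
    ring

theorem coeff_expSubOneDiv_pow_mul_factorial (l : K) (m n : ℕ) :
    coeff m (expSubOneDiv l ^ n) * m.factorial =
      l ^ (m - n) * Nat.stirlingSecond m n * n.factorial := by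
  induction m generalizing n with
  | zero =>
    rcases n with _ | n
    · simp
    · simp [coeff_zero_eq_constantCoeff_apply, constantCoeff_expSubOneDiv]
  | succ m ih =>
    rcases n with _ | n
    · simp
    have hderiv : coeff m (d⁄dX K (expSubOneDiv l ^ (n + 1))) =
        (n + 1) * (coeff m (expSubOneDiv l ^ n) + l * coeff m (expSubOneDiv l ^ (n + 1))) := by
      rw [Derivation.leibniz_pow, derivative_expSubOneDiv]
      simp only [Nat.add_sub_cancel, nsmul_eq_mul, smul_eq_mul]
      rw [← map_natCast (C (R := K)), show C ((n + 1 : ℕ) : K) * (expSubOneDiv l ^ n *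
          (1 + C l * expSubOneDiv l)) = C ((n + 1 : ℕ) : K) * (expSubOneDiv l ^ n +
          C l * expSubOneDiv l ^ (n + 1)) by ring]
      simp only [coeff_C_mul, map_add]
      push_cast
      ring
    have hrec : coeff (m + 1) (expSubOneDiv l ^ (n + 1)) * (m + 1).factorial =
        (n + 1) * (coeff m (expSubOneDiv l ^ n) * m.factorial
          + l * (coeff m (expSubOneDiv l ^ (n + 1)) * m.factorial)) := by
      rw [Nat.factorial_succ, Nat.cast_mul, Nat.cast_succ, ← mul_assoc, ← coeff_derivative, hderiv]
      ring
    rw [hrec, ih, ih, pow_mul_stirlingSecond_succ_succ, Nat.factorial_succ]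
    push_cast
    ring

theorem coeff_expSubOneDiv_pow_of_lt (l : K) {m n : ℕ} (h : m < n) :
    coeff m (expSubOneDiv l ^ n) = 0 := by
  have := coeff_expSubOneDiv_pow_mul_factorial l m n
  rw [Nat.stirlingSecond_eq_zero_of_lt h] at this
  simpa [Nat.factorial_ne_zero] using this

end ExpSubOneDiv

theorem subst_inv {K : Type*} [Field K] {a : K⟦X⟧} (ha : HasSubst a) {F : K⟦X⟧}
    (hF : constantCoeff F ≠ 0) : F⁻¹.subst a = (F.subst a)⁻¹ := by
  have hmul : F.subst a * F⁻¹.subst a = 1 := by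
    rw [← subst_mul ha, PowerSeries.mul_inv_cancel F hF, ← coe_substAlgHom ha, map_one]
  have hunit : constantCoeff (F.subst a) ≠ 0 :=
    left_ne_zero_of_mul_eq_one (by rw [← map_mul, hmul, map_one])
  rw [eq_inv_iff_mul_eq_one hunit, mul_comm, hmul]

section Transfer

variable {K : Type*} [Field K] [CharZero K]

theorem factorial_mul_coeff_subst_expSubOneDiv (l : K) (F : K⟦X⟧) (m : ℕ) :
    m.factorial * coeff m (F.subst (expSubOneDiv l)) =
      ∑ n ∈ range (m + 1), n.factorial * coeff n F * (l ^ (m - n) * Nat.stirlingSecond m n) := by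
  rw [coeff_subst' (hasSubst_expSubOneDiv l),
    finsum_eq_sum_of_support_subset (s := range (m + 1)), mul_sum]
  · refine sum_congr rfl fun n _ => ?_
    rw [smul_eq_mul]
    linear_combination coeff n F * coeff_expSubOneDiv_pow_mul_factorial l m n
  · intro n hn
    rw [coe_range, Set.mem_Iio, Nat.lt_succ_iff]
    by_contra h
    exact hn (by simp [coeff_expSubOneDiv_pow_of_lt l (not_le.mp h)])

theorem subst_expSubOneDiv_binExp (l y : K) : (binExp l y).subst (expSubOneDiv l) = expX y := by
  ext m
  apply mul_left_cancel₀ (Nat.cast_ne_zero.mpr m.factorial_ne_zero : (m.factorial : K) ≠ 0)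
  rw [factorial_mul_coeff_subst_expSubOneDiv, expX, coeff_mk,
    mul_div_cancel₀ _ (Nat.cast_ne_zero.mpr m.factorial_ne_zero),
    ← sum_degFall_mul_pow_mul_stirlingSecond l]
  refine sum_congr rfl fun n _ => ?_
  rw [binExp, coeff_mk, mul_div_cancel₀ _ (Nat.cast_ne_zero.mpr n.factorial_ne_zero)]

end Transfer

theorem stmt8_general {K : Type*} [Field K] [CharZero K] (l u x : K) (hu : u ≠ 1) (r : ℕ)
    (m : ℕ) :
    FEr r u x m =
      ∑ n ∈ Finset.range (m + 1), dFEr r l u x n * l ^ (m - n) * (S2 m n : K) := by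
  have ha := hasSubst_expSubOneDiv l
  have hunit : constantCoeff (binExp l 1 - C u) ≠ 0 := by
    have h1 : constantCoeff (binExp l 1) = 1 := by simp [binExp, degFall]
    rw [map_sub, h1, constantCoeff_C]
    exact sub_ne_zero.mpr hu.symm
  have hsubst : ((C (1 - u) * (binExp l 1 - C u)⁻¹) ^ r * binExp l x).subst (expSubOneDiv l) =
      (C (1 - u) * (expX 1 - C u)⁻¹) ^ r * expX x := by
    rw [subst_mul ha, subst_pow ha, subst_mul ha, subst_inv ha hunit, subst_sub ha, subst_C,
      subst_C, subst_expSubOneDiv_binExp, subst_expSubOneDiv_binExp]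
    rfl
  rw [FEr, ← hsubst, factorial_mul_coeff_subst_expSubOneDiv]
  refine sum_congr rfl fun n _ => ?_
  rw [dFEr, S2_eq_stirlingSecond]
  push_cast
  ring

theorem stmt8 {K : Type*} [Field K] [CharZero K] (l u x : K) (hu : u ≠ 1) (r : ℕ)
    (hr : 1 ≤ r) (m : ℕ) :
    FEr r u x m =
      ∑ n ∈ Finset.range (m + 1), dFEr r l u x n * l ^ (m - n) * (S2 m n : K) :=
  stmt8_general l u x hu r m
end
end

section
/- For all m ≥ 0, the degenerate higher-order Frobenius-Euler polynomial h^{(r)}_{m,λ}(x|u) equals ∑_{n=0}^{m} H^{(r)}_n(x|u) · λ^{m-n} · S₁(m,n), where S₁(m,n) are the (signed) Stirling numbers of the first kind. -/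
open PowerSeries Finset

noncomputable section

/-! Substituting `L(t) = log (1 + λt) / λ` for `t` is a ring endomorphism of `K⟦t⟧` which
commutes with inversion and sends `e^{xt}` to `(1 + λt)^{x/λ}`, so it carries the generating
function of `H^{(r)}_n(x|u)` to that of `h^{(r)}_{n,λ}(x|u)`. Reading off the coefficient of
`t^m` gives `h^{(r)}_{m,λ}(x|u) = ∑_n H^{(r)}_n(x|u) · (m!/n!) [t^m] L^n`, and
`(m!/n!) [t^m] L^n = S₁(m,n) λ^{m-n}` because both sides satisfy the same recurrence: for `L^n`
it comes from `(1 + λt) L' = 1`. -/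

open scoped Nat

theorem S1_succ_succ (m n : ℕ) : S1 (m + 1) (n + 1) = S1 m n - m * S1 m (n + 1) := rfl

theorem S1_succ_zero (m : ℕ) : S1 (m + 1) 0 = 0 := by
  induction m with
  | zero => rfl
  | succ m ih => rw [S1, ih, mul_zero]

theorem S1_eq_zero_of_lt {m n : ℕ} (h : m < n) : S1 m n = 0 := by
  induction m generalizing n with
  | zero => obtain ⟨n, rfl⟩ := Nat.exists_eq_succ_of_ne_zero h.ne'; rfl
  | succ m ih =>
    obtain ⟨n, rfl⟩ := Nat.exists_eq_succ_of_ne_zero (Nat.ne_zero_of_lt h)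
    rw [S1_succ_succ, ih (by omega), ih (by omega), mul_zero, sub_zero]

-- With truncated subtraction this is not `pow_succ`: for `m ≤ n` both sides vanish since
-- `S1 m (n + 1) = 0`.
theorem S1_mul_pow_sub_eq {R : Type*} [CommRing R] (l : R) (m n : ℕ) :
    (S1 m (n + 1) : R) * l ^ (m - n) = l * ((S1 m (n + 1) : R) * l ^ (m - (n + 1))) := by
  rcases lt_or_ge m (n + 1) with h | h
  · simp [S1_eq_zero_of_lt h]
  · rw [show m - n = m - (n + 1) + 1 by omega, pow_succ]
    ring

theorem degFall_eq_sum {R : Type*} [CommRing R] (l y : R) (m : ℕ) :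
    degFall l y m = ∑ n ∈ range (m + 1), (S1 m n : R) * l ^ (m - n) * y ^ n := by
  induction m with
  | zero => simp [degFall, S1]
  | succ m ih =>
    have hlast : (S1 m (m + 1) : R) = 0 := by simp [S1_eq_zero_of_lt (Nat.lt_succ_self m)]
    have hshift : l * ∑ n ∈ range (m + 1), (S1 m n : R) * l ^ (m - n) * y ^ n
        = (S1 m 0 : R) * l ^ (m + 1)
          + ∑ n ∈ range (m + 1), (S1 m (n + 1) : R) * l ^ (m - n) * y ^ (n + 1) := by
      rw [sum_range_succ', sum_range_succ, hlast, mul_add, mul_sum, add_comm]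
      simp only [S1_mul_pow_sub_eq, Nat.sub_zero, zero_mul, add_zero]
      congr 1
      · ring
      · exact sum_congr rfl fun n _ => by ring
    have hstep : ∀ n, (S1 (m + 1) (n + 1) : R) * l ^ (m + 1 - (n + 1)) * y ^ (n + 1)
        = (S1 m n : R) * l ^ (m - n) * y ^ n * y
          - m * ((S1 m (n + 1) : R) * l ^ (m - n) * y ^ (n + 1)) := by
      intro n
      rw [S1_succ_succ, Nat.add_sub_add_right]
      push_cast
      ring
    rw [degFall, ih, sum_range_succ' _ (m + 1), show S1 (m + 1) 0 = -m * S1 m 0 from rfl]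
    simp only [hstep, sum_sub_distrib, ← mul_sum, ← sum_mul, Nat.sub_zero]
    push_cast
    linear_combination (-(m : R)) * hshift

section Subst

variable {R : Type*} [CommRing R] {a : R⟦X⟧}

theorem coeff_pow_eq_zero_of_constantCoeff_eq_zero (ha : constantCoeff a = 0) {m n : ℕ}
    (h : m < n) : coeff m (a ^ n) = 0 :=
  X_pow_dvd_iff.mp (pow_dvd_pow_of_dvd (X_dvd_iff.mpr ha) n) m h

theorem coeff_subst_eq_sum_range (ha : constantCoeff a = 0) (f : R⟦X⟧) (m : ℕ) :
    coeff m (f.subst a) = ∑ n ∈ range (m + 1), coeff n f * coeff m (a ^ n) := by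
  rw [coeff_subst' (HasSubst.of_constantCoeff_zero' ha), finsum_eq_sum_of_support_subset]
  · rfl
  · intro n hn
    by_contra hnm
    rw [coe_range, Set.mem_Iio, not_lt, Nat.succ_le_iff] at hnm
    exact hn (by simp only [coeff_pow_eq_zero_of_constantCoeff_eq_zero ha hnm, smul_zero])

theorem constantCoeff_subst_of_constantCoeff_eq_zero (ha : constantCoeff a = 0) (f : R⟦X⟧) :
    constantCoeff (f.subst a) = constantCoeff f := by
  rw [← coeff_zero_eq_constantCoeff_apply, coeff_subst_eq_sum_range ha]
  simp

theorem inv_subst {k : Type*} [Field k] {a : k⟦X⟧} (ha : constantCoeff a = 0) (f : k⟦X⟧) :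
    f⁻¹.subst a = (f.subst a)⁻¹ := by
  have hsubst := HasSubst.of_constantCoeff_zero' ha
  by_cases hf : constantCoeff f = 0
  · have hfa : constantCoeff (f.subst a) = 0 := by
      rw [constantCoeff_subst_of_constantCoeff_eq_zero ha, hf]
    rw [PowerSeries.inv_eq_zero.mpr hf, PowerSeries.inv_eq_zero.mpr hfa,
      ← coe_substAlgHom hsubst, map_zero]
  · rw [eq_inv_iff_mul_eq_one (by rwa [constantCoeff_subst_of_constantCoeff_eq_zero ha]),
      ← subst_mul hsubst, PowerSeries.inv_mul_cancel f hf, ← coe_substAlgHom hsubst, map_one]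

end Subst

section DegenerateLog

variable {K : Type*} [Field K]

/-- `log (1 + λt) / λ`, given by its coefficients so that it is also defined (as `t`) at `λ = 0`. -/
def degLog (l : K) : K⟦X⟧ :=
  mk fun k => if k = 0 then 0 else (-l) ^ (k - 1) / k

theorem constantCoeff_degLog (l : K) : constantCoeff (degLog l) = 0 := by
  simp [degLog, ← coeff_zero_eq_constantCoeff_apply]

variable [CharZero K]

theorem one_add_C_mul_X_mul_derivative_degLog (l : K) :
    (1 + C l * X) * d⁄dX K (degLog l) = 1 := by
  have hderiv : d⁄dX K (degLog l) = mk fun k => (-l) ^ k := by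
    ext k
    simp only [coeff_derivative, degLog, coeff_mk, Nat.succ_ne_zero, if_false,
      Nat.add_sub_cancel]
    push_cast
    exact div_mul_cancel₀ _ (Nat.cast_add_one_ne_zero k)
  ext (_ | k)
  · simp [hderiv]
  · simp [hderiv, add_mul, mul_assoc, coeff_succ_X_mul, pow_succ]
    ring

theorem coeff_degLog_pow_succ_succ (l : K) (m n : ℕ) :
    ((m : K) + 1) * coeff (m + 1) (degLog l ^ (n + 1))
      = ((n : K) + 1) * coeff m (degLog l ^ n) - l * m * coeff m (degLog l ^ (n + 1)) := by
  have hG : d⁄dX K (degLog l ^ (n + 1)) + C l * (X * d⁄dX K (degLog l ^ (n + 1)))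
      = C ((n : K) + 1) * degLog l ^ n := by
    calc _ = C ((n : K) + 1) * degLog l ^ n * ((1 + C l * X) * d⁄dX K (degLog l)) := by
          rw [Derivation.leibniz_pow, Nat.add_sub_cancel, nsmul_eq_mul, smul_eq_mul, map_add,
            map_natCast, map_one]
          push_cast
          ring
      _ = _ := by rw [one_add_C_mul_X_mul_derivative_degLog, mul_one]
  have h := congrArg (coeff m) hG
  rw [map_add, coeff_C_mul, coeff_C_mul] at h
  rcases m with _ | m
  · rw [coeff_zero_X_mul, coeff_derivative] at h
    push_cast at h ⊢
    linear_combination h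
  · rw [coeff_succ_X_mul, coeff_derivative, coeff_derivative] at h
    push_cast at h ⊢
    linear_combination h

theorem factorial_mul_coeff_degLog_pow (l : K) (m n : ℕ) :
    (m ! : K) * coeff m (degLog l ^ n) = n ! * S1 m n * l ^ (m - n) := by
  induction m generalizing n with
  | zero =>
    rcases n with _ | n
    · simp [S1]
    · simp [coeff_pow_eq_zero_of_constantCoeff_eq_zero (constantCoeff_degLog l) n.succ_pos, S1]
  | succ m ih =>
    rcases n with _ | n
    · simp [coeff_one, S1_succ_zero]
    · calc ((m + 1)! : K) * coeff (m + 1) (degLog l ^ (n + 1))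
          = m ! * (((m : K) + 1) * coeff (m + 1) (degLog l ^ (n + 1))) := by
            push_cast [Nat.factorial_succ]
            ring
        _ = (n + 1) * (n ! * S1 m n * l ^ (m - n))
              - l * m * ((n + 1)! * S1 m (n + 1) * l ^ (m - (n + 1))) := by
            rw [coeff_degLog_pow_succ_succ, ← ih, ← ih]
            ring
        _ = (n + 1)! * S1 (m + 1) (n + 1) * l ^ (m + 1 - (n + 1)) := by
            have h := S1_mul_pow_sub_eq l m n
            rw [S1_succ_succ, Nat.add_sub_add_right]
            push_cast [Nat.factorial_succ] at h ⊢
            linear_combination ((n + 1) * (n ! : K) * m) * h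

theorem subst_degLog_expX (l y : K) : (expX y).subst (degLog l) = binExp l y := by
  ext m
  rw [coeff_subst_eq_sum_range (constantCoeff_degLog l), binExp, coeff_mk, degFall_eq_sum,
    sum_div]
  refine sum_congr rfl fun n _ => ?_
  have hm : (m ! : K) ≠ 0 := Nat.cast_ne_zero.mpr m.factorial_ne_zero
  have hn : (n ! : K) ≠ 0 := Nat.cast_ne_zero.mpr n.factorial_ne_zero
  rw [expX, coeff_mk, eq_div_iff hm, div_mul_eq_mul_div, div_mul_eq_mul_div, mul_assoc,
    mul_comm _ (m ! : K), factorial_mul_coeff_degLog_pow]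
  field_simp

end DegenerateLog

theorem stmt9_general {K : Type*} [Field K] [CharZero K] (l u x : K) (r : ℕ) (m : ℕ) :
    dFEr r l u x m =
      ∑ n ∈ Finset.range (m + 1), FEr r u x n * l ^ (m - n) * (S1 m n : K) := by
  have hL := constantCoeff_degLog l
  have hsubst := HasSubst.of_constantCoeff_zero' hL
  have hseries : ((C (1 - u) * (expX 1 - C u)⁻¹) ^ r * expX x).subst (degLog l)
      = (C (1 - u) * (binExp l 1 - C u)⁻¹) ^ r * binExp l x := by
    rw [subst_mul hsubst, subst_pow hsubst, subst_mul hsubst, inv_subst hL, subst_sub hsubst,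
      subst_degLog_expX, subst_degLog_expX, subst_C, subst_C]
    rfl -- `subst_C` produces `MvPowerSeries.C`
  rw [dFEr, ← hseries, coeff_subst_eq_sum_range hL, mul_sum]
  refine sum_congr rfl fun n _ => ?_
  rw [FEr, mul_left_comm, factorial_mul_coeff_degLog_pow]
  ring

theorem stmt9 {K : Type*} [Field K] [CharZero K] (l u x : K) (hu : u ≠ 1) (r : ℕ)
    (hr : 1 ≤ r) (m : ℕ) :
    dFEr r l u x m =
      ∑ n ∈ Finset.range (m + 1), FEr r u x n * l ^ (m - n) * (S1 m n : K) :=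
  stmt9_general l u x r m
end
end
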